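/- arXiv:1504.07796 — 3 statements merged into one kernel-verified Lean document; each statement's English description precedes it below -/
import Mathlib

section
/- Let j, k, l ≥ 0 be integers with j + k + l = s ≥ 5 and j ≥ s − ⌊s/3⌋ − 1. Then t₃(j+k) + t₄(l) + j + k + k·l ≤ t₃(s) + s, with equality if and only if l = 0. -/
/-- Number of edges of the Turán graph `T(n,r)`: the complete `r`-partite graph
with part sizes as equal as possible. -/
def turanNum (r n : ℕ) : ℕ :=
  n.choose 2 - ((n % r) * ((n / r + 1).choose 2) + (r - n % r) * ((n / r).choose 2))

lemma two_choose_two (m : ℕ) : 2 * m.choose 2 = m * (m - 1) := by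
  rw [Nat.choose_two_right, Nat.mul_div_cancel']
  rcases m with _ | p
  · simp
  · simpa [Nat.mul_comm] using (Nat.even_mul_succ_self p).two_dvd

lemma t3_eq (n : ℕ) : turanNum 3 n = n ^ 2 / 3 := by
  obtain ⟨q, r, hr, rfl⟩ : ∃ q r, r < 3 ∧ n = 3 * q + r :=
    ⟨n / 3, n % 3, Nat.mod_lt _ (by norm_num), by omega⟩
  have h1 : (3 * q + r) % 3 = r := by omega
  have h2 : (3 * q + r) / 3 = q := by omega
  unfold turanNum
  rw [h1, h2]
  have e1 := two_choose_two (3 * q + r)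
  have e2 := two_choose_two (q + 1)
  have e3 := two_choose_two q
  rcases q with _ | p
  · interval_cases r <;> rfl
  · have hq1 : 3 * (p + 1) + r - 1 = 3 * p + 2 + r := by omega
    have hq2 : p + 1 + 1 - 1 = p + 1 := by omega
    have hq3 : p + 1 - 1 = p := by omega
    rw [hq1] at e1; rw [hq2] at e2; rw [hq3] at e3
    obtain ⟨a, ha⟩ : ∃ a, p * p = a := ⟨_, rfl⟩
    obtain ⟨m, hm⟩ : ∃ m, a + p = 2 * m := by
      obtain ⟨m, hm⟩ := Nat.even_mul_succ_self p
      have hx : p * (p + 1) = p * p + p := by ring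
      exact ⟨m, by rw [← ha]; omega⟩
    have e1' : 2 * (3 * (p + 1) + r).choose 2 = 9 * a + 15 * p + 6 + r * (6 * p + 5) + r * r := by
      rw [e1, ← ha]; ring
    have e2' : 2 * (p + 1 + 1).choose 2 = a + 3 * p + 2 := by rw [e2, ← ha]; ring
    have e3' : 2 * (p + 1).choose 2 = a + p := by rw [e3, ← ha]; ring
    have goalrhs : (3 * (p + 1) + r) ^ 2 = 9 * a + 18 * p + 9 + r * (6 * p + 6) + r * r := by
      rw [← ha]; ring
    rw [goalrhs]
    interval_cases r <;> omega

lemma t4_eq (n : ℕ) : turanNum 4 n = 3 * n ^ 2 / 8 := by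
  obtain ⟨q, r, hr, rfl⟩ : ∃ q r, r < 4 ∧ n = 4 * q + r :=
    ⟨n / 4, n % 4, Nat.mod_lt _ (by norm_num), by omega⟩
  have h1 : (4 * q + r) % 4 = r := by omega
  have h2 : (4 * q + r) / 4 = q := by omega
  unfold turanNum
  rw [h1, h2]
  have e1 := two_choose_two (4 * q + r)
  have e2 := two_choose_two (q + 1)
  have e3 := two_choose_two q
  rcases q with _ | p
  · interval_cases r <;> rfl
  · have hq1 : 4 * (p + 1) + r - 1 = 4 * p + 3 + r := by omega
    have hq2 : p + 1 + 1 - 1 = p + 1 := by omega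
    have hq3 : p + 1 - 1 = p := by omega
    rw [hq1] at e1; rw [hq2] at e2; rw [hq3] at e3
    obtain ⟨a, ha⟩ : ∃ a, p * p = a := ⟨_, rfl⟩
    obtain ⟨m, hm⟩ : ∃ m, a + p = 2 * m := by
      obtain ⟨m, hm⟩ := Nat.even_mul_succ_self p
      have hx : p * (p + 1) = p * p + p := by ring
      exact ⟨m, by rw [← ha]; omega⟩
    have e1' : 2 * (4 * (p + 1) + r).choose 2 = 16 * a + 28 * p + 12 + r * (8 * p + 7) + r * r := by
      rw [e1, ← ha]; ring
    have e2' : 2 * (p + 1 + 1).choose 2 = a + 3 * p + 2 := by rw [e2, ← ha]; ring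
    have e3' : 2 * (p + 1).choose 2 = a + p := by rw [e3, ← ha]; ring
    have goalrhs : 3 * (4 * (p + 1) + r) ^ 2 = 48 * a + 96 * p + 48 + r * (24 * p + 24) + 3 * r * r := by
      rw [← ha]; ring
    rw [goalrhs]
    interval_cases r <;> omega

theorem k4_lemma (j k l s : ℕ) (hs : 5 ≤ s) (hsum : j + k + l = s)
    (hj : s - s / 3 - 1 ≤ j) :
    turanNum 3 (j + k) + turanNum 4 l + j + k + k * l ≤ turanNum 3 s + s ∧
      (turanNum 3 (j + k) + turanNum 4 l + j + k + k * l = turanNum 3 s + s ↔ l = 0) := by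
  subst hsum
  obtain ⟨N, hN⟩ : ∃ N, (j + k) ^ 2 = N := ⟨_, rfl⟩
  obtain ⟨L, hL⟩ : ∃ L, l ^ 2 = L := ⟨_, rfl⟩
  obtain ⟨M, hM⟩ : ∃ M, (j + k) * l = M := ⟨_, rfl⟩
  obtain ⟨K, hK⟩ : ∃ K, k * l = K := ⟨_, rfl⟩
  obtain ⟨S, hS⟩ : ∃ S, (j + k + l) ^ 2 = S := ⟨_, rfl⟩
  have f1 : S = N + 2 * M + L := by rw [← hN, ← hL, ← hM, ← hS]; ring
  have hk3 : 3 * k + 2 * l ≤ (j + k) + 3 := by omega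
  have f2 : 3 * K + 2 * L ≤ M + 3 * l := by
    have := Nat.mul_le_mul_right l hk3
    have h1 : (3 * k + 2 * l) * l = 3 * K + 2 * L := by rw [← hK, ← hL]; ring
    have h2 : ((j + k) + 3) * l = M + 3 * l := by rw [← hM]; ring
    omega
  have f3 : l = 0 → L = 0 ∧ M = 0 ∧ K = 0 := by
    rintro rfl
    simp at hL hM hK
    omega
  have f4 : 1 ≤ l → j + k ≤ M ∧ l ≤ L ∧ 3 * l ≤ L + 2 := by
    intro hl
    refine ⟨?_, ?_, ?_⟩
    · calc j + k = (j + k) * 1 := by ring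
        _ ≤ (j + k) * l := Nat.mul_le_mul_left _ hl
        _ = M := hM
    · calc l = l * 1 := by ring
        _ ≤ l * l := Nat.mul_le_mul_left _ hl
        _ = L := by rw [← hL]; ring
    · rcases l with _ | _ | m
      · omega
      · omega
      · have : (m + 1 + 1) ^ 2 = m * m + 4 * m + 4 := by ring
        omega
  rw [t3_eq, t3_eq, t4_eq, hN, hS, hL, hK]
  omega
end

section
/- Let G be a 3-uniform hypergraph on n vertices that is K₄⁻-free (contains no three edges on four vertices of the form {x,y,z},{x,y,w},{x,z,w}) and has at least s₃(n) edges. Then there exists an edge {a,b,c} of G such that d(a,b) + d(a,c) + d(b,c) ≥ n − ⌊n/3⌋, where d(x,y) is the number of edges of G containing both x and y. -/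
/-- Number of edges of the balanced complete tripartite 3-graph on `n` vertices. -/
def s3 (n : ℕ) : ℕ := (n / 3) * ((n + 1) / 3) * ((n + 2) / 3)

/-- A 3-graph (given by its edge set) is `K₄⁻`-free: no four distinct vertices
carry the three edges `{a,b,c}, {a,b,d}, {a,c,d}`. -/
def K4mFree {V : Type*} [DecidableEq V] (E : Finset (Finset V)) : Prop :=
  ¬ ∃ a b c d : V, a ≠ b ∧ a ≠ c ∧ a ≠ d ∧ b ≠ c ∧ b ≠ d ∧ c ≠ d ∧
    ({a, b, c} : Finset V) ∈ E ∧ ({a, b, d} : Finset V) ∈ E ∧ ({a, c, d} : Finset V) ∈ E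

lemma arith (n : ℕ) (hn : 3 ≤ n) : (n - n / 3 - 1) * (n * n - n) < 18 * s3 n := by
  obtain ⟨m, r, hr, rfl⟩ : ∃ m r, r < 3 ∧ n = 3 * m + r :=
    ⟨n / 3, n % 3, Nat.mod_lt _ (by norm_num), (Nat.div_add_mod n 3).symm⟩
  interval_cases r
  · obtain ⟨k, rfl⟩ : ∃ k, m = 1 + k := ⟨m - 1, by omega⟩
    have h1 : (3*(1+k)+0) / 3 = 1+k := by omega
    have h2 : (3*(1+k)+0+1) / 3 = 1+k := by omega
    have h3 : (3*(1+k)+0+2) / 3 = 1+k := by omega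
    simp only [s3, h1, h2, h3]
    have e1 : (3*(1+k)+0) - (1+k) - 1 = 2*k+1 := by omega
    have e2 : (3*(1+k)+0) * (3*(1+k)+0) - (3*(1+k)+0) = (3*(1+k)) * (3*k+2) :=
      Nat.sub_eq_of_eq_add (by ring)
    rw [e1, e2]
    nlinarith
  · have h1 : (3*m+1) / 3 = m := by omega
    have h2 : (3*m+1+1) / 3 = m := by omega
    have h3 : (3*m+1+2) / 3 = m+1 := by omega
    simp only [s3, h1, h2, h3]
    have hm : 1 ≤ m := by omega
    have e1 : (3*m+1) - m - 1 = 2*m := by omega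
    have e2 : (3*m+1) * (3*m+1) - (3*m+1) = (3*m+1) * (3*m) :=
      Nat.sub_eq_of_eq_add (by ring)
    rw [e1, e2]
    nlinarith
  · have h1 : (3*m+2) / 3 = m := by omega
    have h2 : (3*m+2+1) / 3 = m+1 := by omega
    have h3 : (3*m+2+2) / 3 = m+1 := by omega
    simp only [s3, h1, h2, h3]
    have hm : 1 ≤ m := by omega
    have e1 : (3*m+2) - m - 1 = 2*m+1 := by omega
    have e2 : (3*m+2) * (3*m+2) - (3*m+2) = (3*m+2) * (3*m+1) :=
      Nat.sub_eq_of_eq_add (by ring)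
    rw [e1, e2]
    nlinarith

theorem exists_edge_large_codegree {V : Type*} [DecidableEq V] [Fintype V] (n : ℕ)
    (hn : 3 ≤ n) (hV : Fintype.card V = n) (E : Finset (Finset V))
    (h3 : ∀ e ∈ E, e.card = 3) (hK : K4mFree E) (hcard : s3 n ≤ E.card) :
    ∃ a b c : V, ({a, b, c} : Finset V) ∈ E ∧
      n - n / 3 ≤ (E.filter fun e => a ∈ e ∧ b ∈ e).card +
        (E.filter fun e => a ∈ e ∧ c ∈ e).card + (E.filter fun e => b ∈ e ∧ c ∈ e).card := by
  classical
  by_contra hcon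
  push_neg at hcon
  set D : V × V → ℕ := fun p => (E.filter fun e => p.1 ∈ e ∧ p.2 ∈ e).card with hD
  set S : Finset (V × V) := Finset.univ.offDiag with hS
  have hScard : S.card = n * n - n := by
    rw [hS, Finset.offDiag_card, Finset.card_univ, hV]
  have hfe : ∀ e ∈ E, S.filter (fun p => p.1 ∈ e ∧ p.2 ∈ e) = e.offDiag := by
    intro e he
    ext ⟨x, y⟩
    simp only [hS, Finset.mem_filter, Finset.mem_offDiag, Finset.mem_univ, true_and]
    tauto
  have hA : ∑ p ∈ S, D p = 6 * E.card := by
    calc ∑ p ∈ S, D p = ∑ p ∈ S, ∑ e ∈ E, (if p.1 ∈ e ∧ p.2 ∈ e then 1 else 0) := by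
          exact Finset.sum_congr rfl fun p _ => Finset.card_filter _ _
      _ = ∑ e ∈ E, ∑ p ∈ S, (if p.1 ∈ e ∧ p.2 ∈ e then 1 else 0) := Finset.sum_comm
      _ = ∑ e ∈ E, (S.filter fun p => p.1 ∈ e ∧ p.2 ∈ e).card :=
          Finset.sum_congr rfl fun e _ => (Finset.card_filter _ _).symm
      _ = ∑ e ∈ E, 6 := by
          refine Finset.sum_congr rfl fun e he => ?_
          rw [hfe e he, Finset.offDiag_card, h3 e he]
      _ = 6 * E.card := by rw [Finset.sum_const, smul_eq_mul, mul_comm]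
  have hB : ∑ p ∈ S, D p ^ 2 = ∑ e ∈ E, ∑ p ∈ e.offDiag, D p := by
    calc ∑ p ∈ S, D p ^ 2
        = ∑ p ∈ S, ∑ e ∈ E, (if p.1 ∈ e ∧ p.2 ∈ e then D p else 0) := by
          refine Finset.sum_congr rfl fun p _ => ?_
          rw [← Finset.sum_filter, Finset.sum_const, smul_eq_mul, sq]
      _ = ∑ e ∈ E, ∑ p ∈ S, (if p.1 ∈ e ∧ p.2 ∈ e then D p else 0) := Finset.sum_comm
      _ = ∑ e ∈ E, ∑ p ∈ e.offDiag, D p := by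
          refine Finset.sum_congr rfl fun e he => ?_
          rw [← Finset.sum_filter, hfe e he]
  have hsymm : ∀ x y : V, D (x, y) = D (y, x) := by
    intro x y
    simp only [hD]
    congr 1
    exact Finset.filter_congr fun e _ => and_comm
  have hk1 : 1 ≤ n - n / 3 := by omega
  have hC : ∀ e ∈ E, ∑ p ∈ e.offDiag, D p ≤ 2 * (n - n / 3 - 1) := by
    intro e he
    obtain ⟨a, b, c, hab, hac, hbc, rfl⟩ := Finset.card_eq_three.mp (h3 e he)
    have hod : ({a, b, c} : Finset V).offDiag =
        {(a,b), (a,c), (b,a), (b,c), (c,a), (c,b)} := by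
      ext ⟨x, y⟩
      simp only [Finset.mem_offDiag, Finset.mem_insert, Finset.mem_singleton, Prod.mk.injEq]
      constructor
      · rintro ⟨hx, hy, hxy⟩
        rcases hx with rfl | rfl | rfl <;> rcases hy with rfl | rfl | rfl <;> tauto
      · rintro (⟨rfl, rfl⟩ | ⟨rfl, rfl⟩ | ⟨rfl, rfl⟩ | ⟨rfl, rfl⟩ | ⟨rfl, rfl⟩ | ⟨rfl, rfl⟩) <;>
          refine ⟨by simp, by simp, ?_⟩ <;> simp [hab, hac, hbc, hab.symm, hac.symm, hbc.symm]
    have hmem : ∀ u v : V, (u, v) ∉ ({(c, b)} : Finset (V × V)) → True := fun _ _ _ => trivial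
    rw [hod]
    have h1 : ((a,b) : V × V) ∉ ({(a,c), (b,a), (b,c), (c,a), (c,b)} : Finset (V × V)) := by
      simp [Prod.ext_iff, hab, hac, hbc, hab.symm, hac.symm, hbc.symm]
    have h2 : ((a,c) : V × V) ∉ ({(b,a), (b,c), (c,a), (c,b)} : Finset (V × V)) := by
      simp [Prod.ext_iff, hab, hac, hbc, hab.symm, hac.symm, hbc.symm]
    have h3' : ((b,a) : V × V) ∉ ({(b,c), (c,a), (c,b)} : Finset (V × V)) := by
      simp [Prod.ext_iff, hab, hac, hbc, hab.symm, hac.symm, hbc.symm]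
    have h4 : ((b,c) : V × V) ∉ ({(c,a), (c,b)} : Finset (V × V)) := by
      simp [Prod.ext_iff, hab, hac, hbc, hab.symm, hac.symm, hbc.symm]
    have h5 : ((c,a) : V × V) ∉ ({(c,b)} : Finset (V × V)) := by
      simp [Prod.ext_iff, hab, hac, hbc, hab.symm, hac.symm, hbc.symm]
    rw [Finset.sum_insert h1, Finset.sum_insert h2, Finset.sum_insert h3',
      Finset.sum_insert h4, Finset.sum_insert h5, Finset.sum_singleton]
    rw [hsymm b a, hsymm c a, hsymm c b]
    have hlt := hcon a b c he
    have hDab : D (a, b) = (E.filter fun e => a ∈ e ∧ b ∈ e).card := rfl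
    have hDac : D (a, c) = (E.filter fun e => a ∈ e ∧ c ∈ e).card := rfl
    have hDbc : D (b, c) = (E.filter fun e => b ∈ e ∧ c ∈ e).card := rfl
    omega
  have hsum2 : ∑ p ∈ S, D p ^ 2 ≤ 2 * (n - n / 3 - 1) * E.card := by
    rw [hB]
    calc ∑ e ∈ E, ∑ p ∈ e.offDiag, D p ≤ ∑ e ∈ E, 2 * (n - n / 3 - 1) :=
          Finset.sum_le_sum hC
      _ = 2 * (n - n / 3 - 1) * E.card := by rw [Finset.sum_const, smul_eq_mul, mul_comm]
  have hcs : (∑ p ∈ S, D p) ^ 2 ≤ S.card * ∑ p ∈ S, D p ^ 2 := by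
    have h := sq_sum_le_card_mul_sum_sq (s := S) (f := fun p => (D p : ℤ))
    exact_mod_cast h
  have hE : 0 < E.card := by
    have : 0 < s3 n := by
      have : 1 ≤ n / 3 ∧ 1 ≤ (n+1)/3 ∧ 1 ≤ (n+2)/3 := by omega
      exact Nat.mul_pos (Nat.mul_pos (by omega) (by omega)) (by omega)
    omega
  have key : (6 * E.card) ^ 2 ≤ (n * n - n) * (2 * (n - n / 3 - 1) * E.card) := by
    calc (6 * E.card) ^ 2 = (∑ p ∈ S, D p) ^ 2 := by rw [hA]
      _ ≤ S.card * ∑ p ∈ S, D p ^ 2 := hcs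
      _ ≤ S.card * (2 * (n - n / 3 - 1) * E.card) := Nat.mul_le_mul_left _ hsum2
      _ = (n * n - n) * (2 * (n - n / 3 - 1) * E.card) := by rw [hScard]
  have key2 : 18 * E.card ≤ (n - n / 3 - 1) * (n * n - n) := by
    have h : (18 * E.card) * (2 * E.card) ≤ ((n - n / 3 - 1) * (n * n - n)) * (2 * E.card) := by
      calc (18 * E.card) * (2 * E.card) = (6 * E.card) ^ 2 := by ring
        _ ≤ (n * n - n) * (2 * (n - n / 3 - 1) * E.card) := key
        _ = ((n - n / 3 - 1) * (n * n - n)) * (2 * E.card) := by ring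
    exact Nat.le_of_mul_le_mul_right h (by omega)
  have final : 18 * s3 n ≤ (n - n / 3 - 1) * (n * n - n) :=
    le_trans (Nat.mul_le_mul_left 18 hcard) key2
  exact absurd final (not_le.mpr (arith n hn))
end

section
/- Let G be a 3-graph that is {K₄⁻, F₆}-free and let {a,b,c} ∈ E(G). If x, y ∉ {a,b,c} are such that {a,x,y}, {b,x,y}, {c,x,y} are all edges of G (i.e., l(xy) = abc in the link graph), then x and y lie in no other edge of the link graph of abc, and neither x nor y belongs to the link-neighbourhood Γ_abc. -/
def F6Free {V : Type*} [DecidableEq V] (E : Finset (Finset V)) : Prop :=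
  ¬ ∃ v₁ v₂ v₃ v₄ v₅ v₆ : V, ([v₁, v₂, v₃, v₄, v₅, v₆] : List V).Nodup ∧
    ({v₁, v₂, v₃} : Finset V) ∈ E ∧ ({v₁, v₂, v₄} : Finset V) ∈ E ∧
    ({v₃, v₄, v₅} : Finset V) ∈ E ∧ ({v₁, v₅, v₆} : Finset V) ∈ E

section Aux

variable {V : Type*} [DecidableEq V]

lemma rot3 (u v w : V) : ({u, v, w} : Finset V) = {v, w, u} := by
  ext t; simp only [Finset.mem_insert, Finset.mem_singleton]; tauto

lemma rot3' (u v w : V) : ({u, v, w} : Finset V) = {w, u, v} := by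
  ext t; simp only [Finset.mem_insert, Finset.mem_singleton]; tauto

lemma sw23 (u v w : V) : ({u, v, w} : Finset V) = {u, w, v} := by
  ext t; simp only [Finset.mem_insert, Finset.mem_singleton]; tauto

lemma sw12 (u v w : V) : ({u, v, w} : Finset V) = {v, u, w} := by
  ext t; simp only [Finset.mem_insert, Finset.mem_singleton]; tauto

lemma card3_ne {a b c : V} (h : ({a, b, c} : Finset V).card = 3) :
    a ≠ b ∧ a ≠ c ∧ b ≠ c := by
  refine ⟨?_, ?_, ?_⟩ <;> rintro rfl <;> revert h
  · have : ({a, a, c} : Finset V) = {a, c} := by ext t; simp; try tauto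
    rw [this]; intro h
    have := Finset.card_insert_le a ({c} : Finset V)
    simp only [Finset.card_singleton] at this; omega
  · have : ({a, b, a} : Finset V) = {a, b} := by ext t; simp; try tauto
    rw [this]; intro h
    have := Finset.card_insert_le a ({b} : Finset V)
    simp only [Finset.card_singleton] at this; omega
  · have : ({a, b, b} : Finset V) = {a, b} := by ext t; simp; try tauto
    rw [this]; intro h
    have := Finset.card_insert_le a ({b} : Finset V)
    simp only [Finset.card_singleton] at this; omega

lemma k4app (E : Finset (Finset V)) (hK : K4mFree E) (x y p q : V)
    (h1 : x ≠ y) (h2 : x ≠ p) (h3 : x ≠ q) (h4 : y ≠ p) (h5 : y ≠ q) (h6 : p ≠ q)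
    (e1 : ({x, y, p} : Finset V) ∈ E) (e2 : ({x, y, q} : Finset V) ∈ E)
    (e3 : ({x, p, q} : Finset V) ∈ E) : False :=
  hK ⟨x, y, p, q, h1, h2, h3, h4, h5, h6, e1, e2, e3⟩

lemma f6app (E : Finset (Finset V)) (hF : F6Free E) (x y p q v z : V)
    (d1 : x ≠ y) (d2 : x ≠ p) (d3 : x ≠ q) (d4 : x ≠ v) (d5 : x ≠ z)
    (d6 : y ≠ p) (d7 : y ≠ q) (d8 : y ≠ v) (d9 : y ≠ z)
    (d10 : p ≠ q) (d11 : p ≠ v) (d12 : p ≠ z)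
    (d13 : q ≠ v) (d14 : q ≠ z) (d15 : v ≠ z)
    (e1 : ({x, y, p} : Finset V) ∈ E) (e2 : ({x, y, q} : Finset V) ∈ E)
    (e3 : ({p, q, v} : Finset V) ∈ E) (e4 : ({x, v, z} : Finset V) ∈ E) : False :=
  hF ⟨x, y, p, q, v, z, by simp_all, e1, e2, e3, e4⟩

/-- Key: if `{p,x,y}, {q,x,y}, {p,q,v}, {v,x,z}` are edges with all six vertices
distinct, this is a copy of `F₆`. -/
lemma keyF6 (E : Finset (Finset V)) (hF : F6Free E) (x y p q v z : V)
    (d1 : x ≠ y) (d2 : x ≠ p) (d3 : x ≠ q) (d4 : x ≠ v) (d5 : x ≠ z)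
    (d6 : y ≠ p) (d7 : y ≠ q) (d8 : y ≠ v) (d9 : y ≠ z)
    (d10 : p ≠ q) (d11 : p ≠ v) (d12 : p ≠ z)
    (d13 : q ≠ v) (d14 : q ≠ z) (d15 : v ≠ z)
    (ep : ({p, x, y} : Finset V) ∈ E) (eq' : ({q, x, y} : Finset V) ∈ E)
    (epq : ({p, q, v} : Finset V) ∈ E) (ev : ({v, x, z} : Finset V) ∈ E) : False :=
  f6app E hF x y p q v z d1 d2 d3 d4 d5 d6 d7 d8 d9 d10 d11 d12 d13 d14 d15
    (rot3 p x y ▸ ep) (rot3 q x y ▸ eq') epq (sw12 v x z ▸ ev)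

end Aux

/-- If `l(xy) = abc` then `x` and `y` meet no other link-graph edge and lie
outside the link-neighbourhood `Γ_abc`. -/
theorem weight_three_isolated {V : Type*} [DecidableEq V] (E : Finset (Finset V))
    (h3 : ∀ e ∈ E, e.card = 3) (hK : K4mFree E) (hF : F6Free E)
    (a b c : V) (habc : ({a, b, c} : Finset V) ∈ E)
    (x y : V) (hx : x ∉ ({a, b, c} : Finset V)) (hy : y ∉ ({a, b, c} : Finset V))
    (hxy : x ≠ y)
    (ha : ({a, x, y} : Finset V) ∈ E) (hb : ({b, x, y} : Finset V) ∈ E)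
    (hc : ({c, x, y} : Finset V) ∈ E) :
    (∀ z, z ∉ ({a, b, c} : Finset V) → z ≠ x → z ≠ y →
        ∀ v ∈ ({a, b, c} : Finset V),
          ({v, x, z} : Finset V) ∉ E ∧ ({v, y, z} : Finset V) ∉ E) ∧
      ({a, b, x} : Finset V) ∉ E ∧ ({a, c, x} : Finset V) ∉ E ∧
        ({b, c, x} : Finset V) ∉ E ∧
      ({a, b, y} : Finset V) ∉ E ∧ ({a, c, y} : Finset V) ∉ E ∧
        ({b, c, y} : Finset V) ∉ E := by
  obtain ⟨hab, hac, hbc⟩ := card3_ne (h3 _ habc)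
  simp only [Finset.mem_insert, Finset.mem_singleton, not_or] at hx hy
  obtain ⟨hxa, hxb, hxc⟩ := hx
  obtain ⟨hya, hyb, hyc⟩ := hy
  have hyx : y ≠ x := hxy.symm
  refine ⟨?_, ?_, ?_, ?_, ?_, ?_, ?_⟩
  · intro z hz hzx hzy v hv
    simp only [Finset.mem_insert, Finset.mem_singleton, not_or] at hz
    obtain ⟨hza, hzb, hzc⟩ := hz
    have hxz : x ≠ z := hzx.symm
    have hyz : y ≠ z := hzy.symm
    simp only [Finset.mem_insert, Finset.mem_singleton] at hv
    rcases hv with rfl | rfl | rfl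
    · -- v = a : use F₆ on (x,y,b,c,a,z) resp. (y,x,b,c,a,z)
      refine ⟨fun he => ?_, fun he => ?_⟩
      · exact keyF6 E hF x y b c v z hxy hxb hxc hxa hxz hyb hyc hya hyz hbc
          hab.symm (Ne.symm hzb) hac.symm (Ne.symm hzc) (Ne.symm hza) hb hc (rot3 v b c ▸ habc) he
      · exact keyF6 E hF y x b c v z hyx hyb hyc hya hyz hxb hxc hxa hxz hbc
          hab.symm (Ne.symm hzb) hac.symm (Ne.symm hzc) (Ne.symm hza)
          (sw23 b x y ▸ hb) (sw23 c x y ▸ hc) (rot3 v b c ▸ habc) he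
    · -- v = b : use F₆ on (x,y,a,c,b,z)
      refine ⟨fun he => ?_, fun he => ?_⟩
      · exact keyF6 E hF x y a c v z hxy hxa hxc hxb hxz hya hyc hyb hyz hac
          hab (Ne.symm hza) hbc.symm (Ne.symm hzc) (Ne.symm hzb) ha hc (sw23 a v c ▸ habc) he
      · exact keyF6 E hF y x a c v z hyx hya hyc hyb hyz hxa hxc hxb hxz hac
          hab (Ne.symm hza) hbc.symm (Ne.symm hzc) (Ne.symm hzb)
          (sw23 a x y ▸ ha) (sw23 c x y ▸ hc) (sw23 a v c ▸ habc) he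
    · -- v = c : use F₆ on (x,y,a,b,c,z)
      refine ⟨fun he => ?_, fun he => ?_⟩
      · exact keyF6 E hF x y a b v z hxy hxa hxb hxc hxz hya hyb hyc hyz hab
          hac (Ne.symm hza) hbc (Ne.symm hzb) (Ne.symm hzc) ha hb habc he
      · exact keyF6 E hF y x a b v z hyx hya hyb hyc hyz hxa hxb hxc hxz hab
          hac (Ne.symm hza) hbc (Ne.symm hzb) (Ne.symm hzc)
          (sw23 a x y ▸ ha) (sw23 b x y ▸ hb) habc he
  · exact fun he => k4app E hK x y a b hxy hxa hxb hya hyb hab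
      (rot3 a x y ▸ ha) (rot3 b x y ▸ hb) (rot3' a b x ▸ he)
  · exact fun he => k4app E hK x y a c hxy hxa hxc hya hyc hac
      (rot3 a x y ▸ ha) (rot3 c x y ▸ hc) (rot3' a c x ▸ he)
  · exact fun he => k4app E hK x y b c hxy hxb hxc hyb hyc hbc
      (rot3 b x y ▸ hb) (rot3 c x y ▸ hc) (rot3' b c x ▸ he)
  · exact fun he => k4app E hK y x a b hyx hya hyb hxa hxb hab
      (rot3 a y x ▸ sw23 a x y ▸ ha) (rot3 b y x ▸ sw23 b x y ▸ hb) (rot3' a b y ▸ he)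
  · exact fun he => k4app E hK y x a c hyx hya hyc hxa hxc hac
      (rot3 a y x ▸ sw23 a x y ▸ ha) (rot3 c y x ▸ sw23 c x y ▸ hc) (rot3' a c y ▸ he)
  · exact fun he => k4app E hK y x b c hyx hyb hyc hxb hxc hbc
      (rot3 b y x ▸ sw23 b x y ▸ hb) (rot3 c y x ▸ sw23 c x y ▸ hc) (rot3' b c y ▸ he)
end
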